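/- arXiv:2309.16545 — 5 statements merged into one kernel-verified Lean document; each statement's English description precedes it below -/
import Mathlib

section
/- Let x_1, ..., x_n be real numbers each at least 1 with product P. Then x_1 + ... + x_n = P + (n - 1) if and only if there is an index i such that x_i = P and x_j = 1 for all j ≠ i. -/
lemma aux_one_le_prod {ι : Type*} (s : Finset ι) (x : ι → ℝ)
    (h : ∀ i ∈ s, 1 ≤ x i) : (1:ℝ) ≤ ∏ i ∈ s, x i := by
  induction s using Finset.cons_induction with
  | empty => simp
  | cons a s ha ih =>
    rw [Finset.prod_cons]
    have h1 := h a (Finset.mem_cons_self a s)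
    have h2 := ih (fun i hi => h i (Finset.mem_cons_of_mem hi))
    nlinarith

lemma aux_sum_le_prod {ι : Type*} (s : Finset ι) (x : ι → ℝ)
    (h : ∀ i ∈ s, 1 ≤ x i) :
    (∑ i ∈ s, x i) + 1 ≤ (∏ i ∈ s, x i) + s.card := by
  induction s using Finset.cons_induction with
  | empty => simp
  | cons a s ha ih =>
    have h1 : 1 ≤ x a := h a (Finset.mem_cons_self a s)
    have ih' := ih (fun i hi => h i (Finset.mem_cons_of_mem hi))
    have hQ : (1:ℝ) ≤ ∏ i ∈ s, x i :=
      aux_one_le_prod s x (fun i hi => h i (Finset.mem_cons_of_mem hi))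
    rw [Finset.sum_cons, Finset.prod_cons, Finset.card_cons]
    push_cast
    nlinarith [mul_nonneg (sub_nonneg.mpr h1) (sub_nonneg.mpr hQ)]

theorem sum_eq_prod_add_iff (n : ℕ) (hn : 0 < n) (x : Fin n → ℝ)
    (hx : ∀ i, 1 ≤ x i) :
    ∑ i, x i = (∏ i, x i) + (n - 1) ↔
      ∃ i : Fin n, x i = (∏ j, x j) ∧ ∀ j, j ≠ i → x j = 1 := by
  constructor
  · intro h
    by_cases hall : ∀ k, x k = 1
    · exact ⟨⟨0, hn⟩, by simp [hall, Finset.prod_eq_one], fun j _ => hall j⟩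
    · push_neg at hall
      obtain ⟨i, hi⟩ := hall
      have hi' : 1 < x i := lt_of_le_of_ne (hx i) (Ne.symm hi)
      have hone : ∀ j, j ≠ i → x j = 1 := by
        intro j hj
        by_contra hj1
        have hj' : 1 < x j := lt_of_le_of_ne (hx j) (Ne.symm hj1)
        set t := (Finset.univ.erase i).erase j with ht
        have hjt : j ∉ t := Finset.notMem_erase j _
        have h2 : insert j t = Finset.univ.erase i :=
          Finset.insert_erase (Finset.mem_erase.mpr ⟨hj, Finset.mem_univ j⟩)
        have hit : i ∉ insert j t := by
          rw [h2]; exact Finset.notMem_erase i _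
        have h3 : insert i (Finset.univ.erase i) = Finset.univ :=
          Finset.insert_erase (Finset.mem_univ i)
        have hsum : ∑ k, x k = x i + (x j + ∑ k ∈ t, x k) := by
          rw [← h3, ← h2, Finset.sum_insert hit, Finset.sum_insert hjt]
        have hprod : ∏ k, x k = x i * (x j * ∏ k ∈ t, x k) := by
          rw [← h3, ← h2, Finset.prod_insert hit, Finset.prod_insert hjt]
        have hcard : n = t.card + 2 := by
          have : (Finset.univ : Finset (Fin n)).card = t.card + 2 := by
            rw [← h3, ← h2, Finset.card_insert_of_notMem hit,
              Finset.card_insert_of_notMem hjt]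
          rw [Finset.card_univ, Fintype.card_fin] at this
          omega
        have hcard' : (n : ℝ) = (t.card : ℝ) + 2 := by exact_mod_cast hcard
        have key := aux_sum_le_prod t x (fun k _ => hx k)
        have hQ : (1:ℝ) ≤ ∏ k ∈ t, x k :=
          aux_one_le_prod t x (fun k _ => hx k)
        rw [hsum, hprod, hcard'] at h
        nlinarith [mul_pos (sub_pos.mpr hi') (sub_pos.mpr hj'),
          mul_nonneg (sub_nonneg.mpr (one_le_mul_of_one_le_of_one_le hi'.le hj'.le))
            (sub_nonneg.mpr hQ)]
      refine ⟨i, ?_, hone⟩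
      exact (Finset.prod_eq_single i (fun b _ hb => hone b hb)
        (fun h => absurd (Finset.mem_univ i) h)).symm
  · rintro ⟨i, hxi, hone⟩
    have hP : ∏ j, x j = x i :=
      Finset.prod_eq_single i (fun b _ hb => hone b hb)
        (fun h => absurd (Finset.mem_univ i) h)
    have h3 : insert i (Finset.univ.erase i) = Finset.univ :=
      Finset.insert_erase (Finset.mem_univ i)
    have hsum : ∑ k, x k = x i + ∑ k ∈ Finset.univ.erase i, x k :=
      (Finset.add_sum_erase _ x (Finset.mem_univ i)).symm
    have hrest : ∑ k ∈ Finset.univ.erase i, x k = (n:ℝ) - 1 := by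
      rw [Finset.sum_congr rfl (fun k hk => hone k (Finset.mem_erase.mp hk).1),
        Finset.sum_const, Finset.card_erase_of_mem (Finset.mem_univ i)]
      simp [Nat.cast_sub hn]
    rw [hsum, hrest, hP]
end

section
/- For every integer k ≥ 6 and natural numbers N_1 ≥ N_2 ≥ ... ≥ N_k ≥ 2, we have (5/3)·(N_1·N_2·...·N_k + 1) ≥ (N_2 + N_3 + ... + N_k − 2)·(N_1 + N_2 + ... + N_k). -/
lemma key (N : ℕ → ℕ) (s : Finset ℕ) (hs : s.Nonempty) (h2 : ∀ i ∈ s, 2 ≤ N i) :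
    2 ^ (s.card - 1) * ((∑ i ∈ s, N i) + 2) ≤ (∏ i ∈ s, N i) + 2 ^ (s.card - 1) * (2 * s.card) := by
  induction hs using Finset.Nonempty.cons_induction with
  | singleton a => simp
  | cons a s ha hs ih =>
    have h2' : ∀ i ∈ s, 2 ≤ N i := fun i hi => h2 i (Finset.mem_cons_of_mem hi)
    have ht : 2 ≤ N a := h2 a (Finset.mem_cons_self a s)
    have IH := ih h2'
    have hcard : (s.cons a ha).card = s.card + 1 := Finset.card_cons ha
    have hsum : (∑ i ∈ s.cons a ha, N i) = N a + ∑ i ∈ s, N i := Finset.sum_cons ha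
    have hprod : (∏ i ∈ s.cons a ha, N i) = N a * ∏ i ∈ s, N i := Finset.prod_cons ha
    have hc1 : 1 ≤ s.card := Finset.card_pos.mpr hs
    have hS : 2 * s.card ≤ ∑ i ∈ s, N i := by
      calc 2 * s.card = ∑ _i ∈ s, 2 := by simp [mul_comm]
        _ ≤ ∑ i ∈ s, N i := Finset.sum_le_sum h2'
    rw [hcard, hsum, hprod]
    have hpow : 2 ^ (s.card + 1 - 1) = 2 * 2 ^ (s.card - 1) := by
      rw [Nat.add_sub_cancel, ← pow_succ']
      congr 1
      omega
    rw [hpow]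
    set A := 2 ^ (s.card - 1) with hA
    set SS := ∑ i ∈ s, N i with hSS
    set P := ∏ i ∈ s, N i with hP
    set t := N a with htdef
    set c := s.card with hcdef
    rw [hcdef] at IH ⊢
    zify at IH hS ht ⊢
    have hApos : (0:ℤ) ≤ (A:ℤ) := by positivity
    nlinarith [mul_le_mul_of_nonneg_left IH (by linarith : (0:ℤ) ≤ (t:ℤ)),
      mul_nonneg (mul_nonneg hApos (by linarith : (0:ℤ) ≤ (t:ℤ) - 2)) (by linarith : (0:ℤ) ≤ (SS:ℤ) - 2*(c:ℤ))]

lemma sq_le_two_pow (n : ℕ) (hn : 4 ≤ n) : n ^ 2 ≤ 2 ^ n := by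
  induction n, hn using Nat.le_induction with
  | base => norm_num
  | succ m hm ih =>
    have h2 : (m + 1) ^ 2 ≤ 2 * m ^ 2 := by nlinarith
    calc (m + 1) ^ 2 ≤ 2 * m ^ 2 := h2
      _ ≤ 2 * 2 ^ m := by omega
      _ = 2 ^ (m + 1) := by ring

lemma final (c S n1 P q : ℤ) (hc : 5 ≤ c) (hSl : 2*c ≤ S) (hSu : S ≤ c*n1)
    (hn : 2 ≤ n1) (hq : (c-1)^2 ≤ q) (hkey : q*(S+2) ≤ P + q*(2*c)) :
    3*(S-2)*(n1+S) ≤ 5*(n1*P+1) := by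
  have hD : 0 ≤ S + 2 - 2*c := by linarith
  have hq0 : 0 ≤ q := by nlinarith
  have hkey' : q*(S+2-2*c) ≤ P := by nlinarith
  have step1 : 3*(S-2)*(c+1) ≤ 5*(c-1)^2*(S+2-2*c) := by
    nlinarith [mul_nonneg (show (0:ℤ) ≤ 5*(c-1)^2-3*(c+1) by nlinarith) (show (0:ℤ) ≤ S-2*c by linarith),
      mul_nonneg (show (0:ℤ) ≤ c-1 by linarith) (show (0:ℤ) ≤ 4*c-16 by linarith)]
  have step2 : n1 + S ≤ (c+1)*n1 := by nlinarith
  calc 3*(S-2)*(n1+S) ≤ 3*(S-2)*((c+1)*n1) :=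
        mul_le_mul_of_nonneg_left step2 (by linarith)
    _ = (3*(S-2)*(c+1))*n1 := by ring
    _ ≤ (5*(c-1)^2*(S+2-2*c))*n1 := mul_le_mul_of_nonneg_right step1 (by linarith)
    _ ≤ (5*(q*(S+2-2*c)))*n1 := by
        have h := mul_le_mul_of_nonneg_right hq hD
        nlinarith [mul_le_mul_of_nonneg_right h (show (0:ℤ) ≤ n1 by linarith)]
    _ ≤ (5*P)*n1 := by
        nlinarith [mul_le_mul_of_nonneg_right hkey' (show (0:ℤ) ≤ n1 by linarith)]
    _ ≤ 5*(n1*P+1) := by nlinarith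

theorem five_prod_ge (k : ℕ) (hk : 6 ≤ k) (N : ℕ → ℕ)
    (hN : ∀ i ∈ Finset.Icc 1 k, 2 ≤ N i)
    (hmono : ∀ i ∈ Finset.Icc 1 k, ∀ j ∈ Finset.Icc 1 k, i ≤ j → N j ≤ N i) :
    3 * ((∑ i ∈ Finset.Icc 2 k, N i) - 2) * ∑ i ∈ Finset.Icc 1 k, N i ≤
      5 * ((∏ i ∈ Finset.Icc 1 k, N i) + 1) := by
  have hsplit : Finset.Icc 1 k = insert 1 (Finset.Icc 2 k) := by
    ext i; simp only [Finset.mem_Icc, Finset.mem_insert]; omega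
  have h1not : 1 ∉ Finset.Icc 2 k := by simp
  have hsum : (∑ i ∈ Finset.Icc 1 k, N i) = N 1 + ∑ i ∈ Finset.Icc 2 k, N i := by
    rw [hsplit, Finset.sum_insert h1not]
  have hprod : (∏ i ∈ Finset.Icc 1 k, N i) = N 1 * ∏ i ∈ Finset.Icc 2 k, N i := by
    rw [hsplit, Finset.prod_insert h1not]
  have hcard : (Finset.Icc 2 k).card = k - 1 := by
    rw [Nat.card_Icc]; omega
  have hne : (Finset.Icc 2 k).Nonempty := ⟨2, by simp only [Finset.mem_Icc]; omega⟩
  have h2' : ∀ i ∈ Finset.Icc 2 k, 2 ≤ N i := fun i hi => by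
    refine hN i ?_
    simp only [Finset.mem_Icc] at hi ⊢; omega
  have hkey := key N (Finset.Icc 2 k) hne h2'
  rw [hcard] at hkey
  have hpow2 : 2 ^ (k - 1 - 1) = 2 ^ (k - 2) := by congr 1
  rw [hpow2] at hkey
  have hS2l : 2 * (k - 1) ≤ ∑ i ∈ Finset.Icc 2 k, N i := by
    calc 2 * (k - 1) = ∑ _i ∈ Finset.Icc 2 k, 2 := by simp [hcard, mul_comm]
      _ ≤ ∑ i ∈ Finset.Icc 2 k, N i := Finset.sum_le_sum h2'
  have hS2u : (∑ i ∈ Finset.Icc 2 k, N i) ≤ (k - 1) * N 1 := by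
    calc (∑ i ∈ Finset.Icc 2 k, N i) ≤ ∑ _i ∈ Finset.Icc 2 k, N 1 := by
          refine Finset.sum_le_sum fun i hi => ?_
          simp only [Finset.mem_Icc] at hi
          exact hmono 1 (by simp only [Finset.mem_Icc]; omega) i
            (by simp only [Finset.mem_Icc]; omega) (by omega)
      _ = (k - 1) * N 1 := by simp [hcard]
  have hN1 : 2 ≤ N 1 := hN 1 (by simp only [Finset.mem_Icc]; omega)
  have hQ : (k - 2) ^ 2 ≤ 2 ^ (k - 2) := sq_le_two_pow (k - 2) (by omega)
  rw [hsum, hprod]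
  have h2S2 : 2 ≤ ∑ i ∈ Finset.Icc 2 k, N i := by omega
  have hk1 : 1 ≤ k := by omega
  have hk2 : 2 ≤ k := by omega
  zify [h2S2, hk1, hk2] at hkey hS2l hS2u hQ ⊢
  exact final ((k:ℤ) - 1) (∑ i ∈ Finset.Icc 2 k, (N i : ℤ)) (N 1) (∏ i ∈ Finset.Icc 2 k, (N i : ℤ))
    (2 ^ (k - 2)) (by omega) (by linarith) (by linarith) (by exact_mod_cast hN1)
    (by linarith) (by linarith)
end

section
/- For all integers k ≥ 2, y ≥ 2, and z ≥ y, we have (1 − y + y^(k−1)·z)·(k + 2)·(1 + y^(k−1)·z) ≥ (1 + y^k)·k·z². -/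
theorem key_ineq_d2 (k : ℕ) (y z : ℤ) (hk : 2 ≤ k) (hy : 2 ≤ y) (hz : y ≤ z) :
    (1 + y ^ k) * k * z ^ 2 ≤
      (1 - y + y ^ (k - 1) * z) * (k + 2) * (1 + y ^ (k - 1) * z) := by
  set w : ℤ := y ^ (k - 1) with hw
  have hyk : y ^ k = y * w := by
    rw [hw, ← pow_succ']
    congr 1
    omega
  have hK : (2 : ℤ) ≤ (k : ℤ) := by exact_mod_cast hk
  rcases eq_or_lt_of_le hk with h2 | h3
  · -- k = 2
    subst h2
    simp only [hw]
    push_cast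
    nlinarith [mul_pos (by linarith : (0:ℤ) < y) (by linarith : (0:ℤ) < z),
      sq_nonneg (y*z - z), sq_nonneg (y - 2), sq_nonneg (z - y),
      mul_nonneg (mul_nonneg (by linarith : (0:ℤ) ≤ y) (by linarith : (0:ℤ) ≤ z)) (by linarith : (0:ℤ) ≤ z - y),
      mul_nonneg (by linarith : (0:ℤ) ≤ y - 2) (by linarith : (0:ℤ) ≤ z - 2)]
  · -- k ≥ 3, so w ≥ y^2
    have hw2 : y ^ 2 ≤ w := by
      rw [hw]
      exact pow_le_pow_right₀ (by linarith) (by omega)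
    rw [hyk]
    have hzpos : (0:ℤ) < z := by linarith
    have hwy : y ≤ w := by nlinarith
    have slope : (1 + y * w) * z ^ 2 ≤ (1 - y + w * z) * (1 + w * z) := by
      nlinarith [mul_nonneg (by nlinarith : (0:ℤ) ≤ w - y^2) (sq_nonneg z),
        mul_nonneg (mul_nonneg (by linarith : (0:ℤ) ≤ y - 2) (by linarith : (0:ℤ) ≤ w)) (sq_nonneg z),
        mul_nonneg (mul_nonneg (by linarith : (0:ℤ) ≤ w) hzpos.le) (by linarith : (0:ℤ) ≤ z - y),
        mul_pos hzpos hzpos, mul_pos (by linarith : (0:ℤ) < w) hzpos,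
        mul_nonneg (by linarith : (0:ℤ) ≤ y) (by linarith : (0:ℤ) ≤ w)]
    have hA : (0:ℤ) ≤ 1 - y + w * z := by nlinarith
    have hB : (0:ℤ) ≤ 1 + w * z := by nlinarith
    have base : (1 + y * w) * 2 * z ^ 2 ≤ (1 - y + w * z) * 4 * (1 + w * z) := by
      nlinarith [slope, mul_nonneg hA hB]
    have hK2 : (0:ℤ) ≤ (k : ℤ) - 2 := by linarith
    nlinarith [mul_nonneg hK2 (by linarith [slope] : (0:ℤ) ≤ (1 - y + w * z) * (1 + w * z) - (1 + y * w) * z ^ 2), base]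
end

section
/- Let k ≥ 1 and let N_1, ..., N_k be natural numbers each at least 1. Define f(x) = 1 if x = 1 and f(x) = 1 + k·x if x > 1. Then k + (k+1)·(N_1·N_2·...·N_k) ≥ f(N_1) + f(N_2) + ... + f(N_k). -/
lemma sum_le_prod_of_two_le {ι : Type*} [DecidableEq ι] (s : Finset ι) (g : ι → ℕ)
    (hg : ∀ i ∈ s, 2 ≤ g i) : ∑ i ∈ s, g i ≤ ∏ i ∈ s, g i := by
  induction s using Finset.induction with
  | empty => simp
  | @insert a s ha ih =>
    rw [Finset.sum_insert ha, Finset.prod_insert ha]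
    have hga : 2 ≤ g a := hg a (Finset.mem_insert_self a s)
    have ihs := ih (fun i hi => hg i (Finset.mem_insert_of_mem hi))
    rcases s.eq_empty_or_nonempty with rfl | ⟨b, hb⟩
    · simp
    · have hP : 2 ≤ ∏ i ∈ s, g i :=
        le_trans (hg b (Finset.mem_insert_of_mem hb))
          (Finset.single_le_prod' (fun i hi => le_trans one_le_two (hg i (Finset.mem_insert_of_mem hi))) hb)
      calc g a + ∑ i ∈ s, g i ≤ g a + ∏ i ∈ s, g i := by omega
        _ ≤ g a * ∏ i ∈ s, g i := by nlinarith

theorem f_sum_le (k : ℕ) (hk : 1 ≤ k) (N : Fin k → ℕ) (hN : ∀ i, 1 ≤ N i) :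
    ∑ i, (if N i = 1 then 1 else 1 + k * N i) ≤ k + (k + 1) * ∏ i, N i := by
  classical
  have h1 : ∑ i, (if N i = 1 then 1 else 1 + k * N i)
      = k + k * ∑ i ∈ Finset.univ.filter (fun i => N i ≠ 1), N i := by
    rw [Finset.mul_sum, Finset.sum_filter]
    have : ∀ i : Fin k, (if N i = 1 then 1 else 1 + k * N i)
        = 1 + (if N i ≠ 1 then k * N i else 0) := by
      intro i; by_cases h : N i = 1 <;> simp [h]
    simp_rw [this, Finset.sum_add_distrib, Finset.sum_const, Finset.card_univ,
      Fintype.card_fin, smul_eq_mul, mul_one]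
  rw [h1]
  have h2 : ∑ i ∈ Finset.univ.filter (fun i => N i ≠ 1), N i
      ≤ ∏ i ∈ Finset.univ.filter (fun i => N i ≠ 1), N i := by
    apply sum_le_prod_of_two_le
    intro i hi
    have := hN i
    simp only [Finset.mem_filter] at hi
    omega
  have h3 : ∏ i ∈ Finset.univ.filter (fun i => N i ≠ 1), N i ≤ ∏ i, N i :=
    Finset.prod_le_prod_of_subset_of_one_le' (Finset.filter_subset _ _)
      (fun i _ _ => hN i)
  exact Nat.add_le_add_left (Nat.mul_le_mul (by omega) (le_trans h2 h3)) k
end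

section
/- Let k ≥ 2 and let N_1, ..., N_k, μ_1, ..., μ_k be nonnegative rationals with N_i ≥ 2 and μ_i ≤ N_i/2 for all i, and set N̄_i = (k + μ_i)·N_i. If μ_i = N_i/2 for all i and either k ≥ 7, or k = 6 with at most 4 of the N_i equal to 2, then (∏ N_i + 1)·(1 + ∑ μ_i + k) + k + ∑ μ_i·(N_i + N̄_i) ≥ (1 + ∑ μ_i)·∑ (N_i + N̄_i). -/
/-!
Write `E = ∑ N_i`, `P = ∏ N_i`; with `μ_i = N_i / 2` the claim becomes
`∑ (1 + (E - N_i)/2) N_i (1 + k + N_i/2) ≤ (P + 1)(1 + E/2 + k) + k`.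
Since every `N_i ≥ 2`, the product `P` dominates `2^(k-1) N_i` and `2^(k-2) N_i N_j` for `i ≠ j`,
so after multiplying by `2^(k-1)` every monomial on the left is bounded by a multiple of `P`.
Using `E ≥ 2k` and `2^(k-1) ≥ k`, what remains is `(k + 2) k² ≤ (2k + 1) 2^(k-1)`,
which holds for `k ≥ 6`.
-/

open Finset

theorem Nat.add_two_mul_sq_le_two_pow {k : ℕ} (hk : 6 ≤ k) :
    (k + 2) * k ^ 2 ≤ (2 * k + 1) * 2 ^ (k - 1) := by
  induction k, hk using Nat.le_induction with
  | base => norm_num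
  | succ n hn ih =>
    rw [show n + 1 - 1 = n - 1 + 1 by omega, pow_succ 2 (n - 1)]
    nlinarith

theorem prod_mul_pow_card_sdiff_le {ι R : Type*} [CommSemiring R] [PartialOrder R]
    [IsOrderedRing R] [DecidableEq ι] {s t : Finset ι} {f : ι → R} {b : R} (hts : t ⊆ s)
    (hb : 0 ≤ b) (hf : ∀ i ∈ s, b ≤ f i) :
    (∏ i ∈ t, f i) * b ^ (#s - #t) ≤ ∏ i ∈ s, f i := by
  have hf0 : ∀ i ∈ s, 0 ≤ f i := fun i hi => hb.trans (hf i hi)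
  rw [← prod_sdiff hts, ← card_sdiff_of_subset hts, ← prod_const, mul_comm]
  gcongr with i hi
  · exact prod_nonneg fun i hi => hf0 i (hts hi)
  · exact hf i (mem_sdiff.1 hi).1

section

variable {ι : Type*} [Fintype ι] {N : ι → ℚ}

theorem two_pow_mul_le_prod (hN : ∀ i, 2 ≤ N i) (i : ι) :
    2 ^ (Fintype.card ι - 1) * N i ≤ ∏ j, N j := by
  classical
  have := prod_mul_pow_card_sdiff_le (subset_univ {i}) zero_le_two fun j _ => hN j
  rwa [prod_singleton, card_singleton, card_univ, mul_comm] at this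

theorem two_pow_mul_mul_le_two_mul_prod (hN : ∀ i, 2 ≤ N i) {i j : ι} (hij : i ≠ j) :
    2 ^ (Fintype.card ι - 1) * (N i * N j) ≤ 2 * ∏ l, N l := by
  classical
  have := prod_mul_pow_card_sdiff_le (subset_univ {i, j}) zero_le_two fun l _ => hN l
  rw [prod_pair hij, card_pair hij, card_univ] at this
  have hpow : (2 : ℚ) ^ (Fintype.card ι - 1) ≤ 2 * 2 ^ (Fintype.card ι - 2) := by
    rw [← pow_succ']
    exact pow_le_pow_right₀ one_le_two (by omega)
  have hNij : 0 ≤ N i * N j := mul_nonneg (zero_le_two.trans (hN i)) (zero_le_two.trans (hN j))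
  nlinarith

theorem two_pow_mul_mul_sum_sub_le (hN : ∀ i, 2 ≤ N i) (i : ι) :
    2 ^ (Fintype.card ι - 1) * (N i * (∑ j, N j - N i)) ≤
      2 * (Fintype.card ι - 1) * ∏ j, N j := by
  classical
  have hcard : ((univ.erase i).card : ℚ) = Fintype.card ι - 1 := by
    rw [card_erase_of_mem (mem_univ i), card_univ,
      Nat.cast_pred (Fintype.card_pos_iff.2 ⟨i⟩)]
  calc 2 ^ (Fintype.card ι - 1) * (N i * (∑ j, N j - N i))
      = ∑ j ∈ univ.erase i, 2 ^ (Fintype.card ι - 1) * (N i * N j) := by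
        rw [← sum_erase_eq_sub (mem_univ i), mul_sum, mul_sum]
    _ ≤ ∑ _j ∈ univ.erase i, 2 * ∏ l, N l :=
        sum_le_sum fun j hj => two_pow_mul_mul_le_two_mul_prod hN (ne_of_mem_erase hj).symm
    _ = 2 * (Fintype.card ι - 1) * ∏ j, N j := by
        rw [sum_const, nsmul_eq_mul, hcard]; ring

theorem two_pow_mul_summand_le (hN : ∀ i, 2 ≤ N i) {c : ℚ} (hc : 0 ≤ c) (i : ι) :
    2 ^ (Fintype.card ι - 1) * ((1 + (∑ j, N j - N i) / 2) * (N i * (c + N i / 2))) ≤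
      Fintype.card ι * c * ∏ j, N j + Fintype.card ι * (∏ j, N j) * N i / 2 := by
  have hNi : 0 ≤ N i := zero_le_two.trans (hN i)
  have hsingle := two_pow_mul_le_prod hN i
  have hpairs := two_pow_mul_mul_sum_sub_le hN i
  have := mul_le_mul_of_nonneg_right hsingle hNi
  have := mul_le_mul_of_nonneg_right hpairs hNi
  have := mul_le_mul_of_nonneg_left hsingle hc
  have := mul_le_mul_of_nonneg_left hpairs hc
  nlinarith

theorem two_pow_mul_sum_le (hN : ∀ i, 2 ≤ N i) {c : ℚ} (hc : 0 ≤ c) :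
    2 ^ (Fintype.card ι - 1) *
        ∑ i, (1 + (∑ j, N j - N i) / 2) * (N i * (c + N i / 2)) ≤
      Fintype.card ι * (Fintype.card ι * c * ∏ j, N j) +
        Fintype.card ι * (∏ j, N j) * (∑ j, N j) / 2 := by
  rw [mul_sum]
  refine (sum_le_sum fun i _ => two_pow_mul_summand_le hN hc i).trans_eq ?_
  rw [sum_add_distrib, sum_const, card_univ, nsmul_eq_mul, mul_sum, sum_div]

theorem sum_le_prod_add_one_mul_of_six_le_card
    (hN : ∀ i, 2 ≤ N i) (hι : 6 ≤ Fintype.card ι) :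
    ∑ i, (1 + (∑ j, N j - N i) / 2) * (N i * (1 + Fintype.card ι + N i / 2)) ≤
      ((∏ i, N i) + 1) * (1 + (∑ i, N i) / 2 + Fintype.card ι) + Fintype.card ι := by
  set n := Fintype.card ι
  set E := ∑ i, N i
  set P := ∏ i, N i
  have hP : 0 < P := prod_pos fun i _ => zero_lt_two.trans_le (hN i)
  have hE : 2 * n ≤ E := by
    simpa [mul_comm] using card_nsmul_le_sum univ N 2 fun i _ => hN i
  have hn_le_pow : (n : ℚ) ≤ 2 ^ (n - 1) := by
    have := Nat.lt_two_pow_self (n := n - 1)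
    exact_mod_cast (show n ≤ 2 ^ (n - 1) by omega)
  have hkey : ((n : ℚ) + 2) * n ^ 2 ≤ (2 * n + 1) * 2 ^ (n - 1) := by
    exact_mod_cast Nat.add_two_mul_sq_le_two_pow hι
  have hsum := two_pow_mul_sum_le hN (c := 1 + n) (by positivity)
  rw [← mul_le_mul_iff_right₀ (by positivity : (0 : ℚ) < 2 ^ (n - 1))]
  refine hsum.trans ?_
  nlinarith [mul_nonneg hP.le (sub_nonneg.2 hkey),
    mul_nonneg (mul_nonneg hP.le (by linarith : (0 : ℚ) ≤ E / 2 - n)) (sub_nonneg.2 hn_le_pow)]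

end

theorem crucial_ineq_extreme_case (k : ℕ) (N μ : Fin k → ℚ)
    (hN : ∀ i, 2 ≤ N i) (hμ : ∀ i, μ i = N i / 2)
    (hk : 7 ≤ k ∨ (k = 6 ∧ (Finset.univ.filter (fun i => N i = 2)).card ≤ 4)) :
    (1 + ∑ i, μ i) * ∑ i, (N i + ((k : ℚ) + μ i) * N i) ≤
      ((∏ i, N i) + 1) * (1 + (∑ i, μ i) + k) + k +
        ∑ i, μ i * (N i + ((k : ℚ) + μ i) * N i) := by
  have hk6 : 6 ≤ Fintype.card (Fin k) := by rw [Fintype.card_fin]; omega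
  have h := sum_le_prod_add_one_mul_of_six_le_card hN hk6
  rw [Fintype.card_fin] at h
  have hsplit : ∑ i, (1 + (∑ j, N j - N i) / 2) * (N i * (1 + k + N i / 2)) =
      (1 + ∑ i, μ i) * ∑ i, (N i + ((k : ℚ) + μ i) * N i) -
        ∑ i, μ i * (N i + ((k : ℚ) + μ i) * N i) := by
    simp only [hμ, ← sum_div, mul_sum, ← sum_sub_distrib]
    exact sum_congr rfl fun i _ => by ring
  simp only [hμ, ← sum_div] at hsplit ⊢
  linarith
end
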